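/- The number of simple graphs on vertex set {1,...,n} with degree sequence d_1,...,d_n is at most M! / (2^{M/2} (M/2)! ∏_{j=1}^n d_j!), where M = ∑ d_j is even. -/

import Mathlib

/-!
Label the neighbours of each vertex `v` of a graph with degree sequence `d` by `Fin (d v)`; this
can be done in `∏ v, (d v)!` ways. A labelled graph is encoded by a fixed-point-free involution of
the `M` half-edges `Σ v, Fin (d v)`, sending `(v, i)` to the half-edge at `w = ℓ v i` whose label
is `v`. The labelled graph can be read back from its involution, and the fixed-point-free
involutions are the permutations of cycle type `2^{M/2}`, of which there are
`M! / (2^{M/2} (M/2)!)`.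
-/

open Finset Nat

namespace Equiv.Perm

variable {α : Type*} [Fintype α] [DecidableEq α]

theorem cycleType_eq_replicate_two {g : Perm α} (hg : Function.Involutive g)
    (hfix : ∀ x, g x ≠ x) : g.cycleType = Multiset.replicate (Fintype.card α / 2) 2 := by
  have hsq : g ^ 2 = 1 := Equiv.ext fun x => hg x
  have hct := cycleType_of_pow_prime_eq_one hsq
  have hsum : g.cycleType.sum = Fintype.card α := by
    rw [sum_cycleType, Finset.eq_univ_of_forall fun x => mem_support.2 (hfix x), Finset.card_univ]
  rw [hct, Multiset.sum_replicate, smul_eq_mul] at hsum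
  rw [hct, ← hsum, Nat.mul_div_cancel _ two_pos]

theorem card_cycleType_eq_replicate_two_mul {k : ℕ} (hk : Fintype.card α = 2 * k) :
    #{g : Perm α | g.cycleType = Multiset.replicate k 2} * (2 ^ k * k !) = (2 * k)! := by
  have := card_of_cycleType_mul_eq α (Multiset.replicate k 2)
  rcases k.eq_zero_or_pos with rfl | hk0
  · simp_all
  simpa [Multiset.sum_replicate, Multiset.prod_replicate, hk, Multiset.toFinset_replicate,
    Multiset.mem_replicate, hk0.ne', mul_comm] using this

end Equiv.Perm

namespace SimpleGraph

variable {V : Type*} {G : SimpleGraph V} {d : V → ℕ}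

def dartEquivSigma (G : SimpleGraph V) : G.Dart ≃ Σ v, G.neighborSet v where
  toFun D := ⟨D.fst, D.snd, D.adj⟩
  invFun s := ⟨(s.1, s.2), s.2.2⟩

def halfEdgeEquivDart (ℓ : ∀ v, Fin (d v) ≃ G.neighborSet v) : (Σ v, Fin (d v)) ≃ G.Dart :=
  (Equiv.sigmaCongrRight ℓ).trans G.dartEquivSigma.symm

def configuration (ℓ : ∀ v, Fin (d v) ≃ G.neighborSet v) : Equiv.Perm (Σ v, Fin (d v)) :=
  (halfEdgeEquivDart ℓ).symm.permCongr (Function.Involutive.toPerm _ Dart.symm_involutive)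

theorem configuration_apply_fst (ℓ : ∀ v, Fin (d v) ≃ G.neighborSet v) (v : V) (i : Fin (d v)) :
    (configuration ℓ ⟨v, i⟩).1 = ℓ v i := rfl

theorem halfEdgeEquivDart_configuration (ℓ : ∀ v, Fin (d v) ≃ G.neighborSet v)
    (x : Σ v, Fin (d v)) :
    halfEdgeEquivDart ℓ (configuration ℓ x) = (halfEdgeEquivDart ℓ x).symm := by
  simp [configuration, Equiv.permCongr_apply]

theorem configuration_involutive (ℓ : ∀ v, Fin (d v) ≃ G.neighborSet v) :
    Function.Involutive (configuration ℓ) := fun x =>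
  (halfEdgeEquivDart ℓ).injective <| by simp only [halfEdgeEquivDart_configuration, Dart.symm_symm]

theorem configuration_apply_ne (ℓ : ∀ v, Fin (d v) ≃ G.neighborSet v) (x : Σ v, Fin (d v)) :
    configuration ℓ x ≠ x := fun h =>
  Dart.symm_ne _ <| by rw [← halfEdgeEquivDart_configuration, h]

theorem mem_neighborSet_iff_exists_labelling {v w : V} {β : Type*} (e : β ≃ G.neighborSet v) :
    w ∈ G.neighborSet v ↔ ∃ i, (e i : V) = w :=
  ⟨fun hw => ⟨e.symm ⟨w, hw⟩, by simp⟩, fun ⟨i, hi⟩ => hi ▸ (e i).2⟩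

theorem configuration_injective :
    Function.Injective fun p : Σ G : SimpleGraph V, ∀ v, Fin (d v) ≃ G.neighborSet v =>
      configuration p.2 := by
  rintro ⟨G₁, ℓ₁⟩ ⟨G₂, ℓ₂⟩ (h : configuration ℓ₁ = configuration ℓ₂)
  have hℓ : ∀ v i, (ℓ₁ v i : V) = ℓ₂ v i := fun v i => by
    rw [← configuration_apply_fst, ← configuration_apply_fst, h]
  obtain rfl : G₁ = G₂ := by
    ext v w
    rw [← mem_neighborSet, ← mem_neighborSet, mem_neighborSet_iff_exists_labelling (ℓ₁ v),
      mem_neighborSet_iff_exists_labelling (ℓ₂ v)]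
    simp only [hℓ]
  obtain rfl : ℓ₁ = ℓ₂ := funext fun v => Equiv.ext fun i => Subtype.ext (hℓ v i)
  rfl

theorem cycleType_configuration [Fintype V] [DecidableEq V]
    (ℓ : ∀ v, Fin (d v) ≃ G.neighborSet v) {k : ℕ} (hk : ∑ v, d v = 2 * k) :
    (configuration ℓ).cycleType = Multiset.replicate k 2 := by
  have hcard : Fintype.card (Σ v, Fin (d v)) = 2 * k := by simp [hk]
  rw [Equiv.Perm.cycleType_eq_replicate_two (configuration_involutive ℓ)
    (configuration_apply_ne ℓ), hcard, Nat.mul_div_cancel_left k two_pos]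

open scoped Classical in
theorem ncard_setOf_degree_eq_mul_le [Fintype V] (d : V → ℕ) {k : ℕ} (hk : ∑ v, d v = 2 * k) :
    {G : SimpleGraph V | ∀ v, G.degree v = d v}.ncard * (∏ v, (d v)!) * (2 ^ k * k !) ≤
      (2 * k)! := by
  set S := {G : SimpleGraph V | ∀ v, G.degree v = d v}
  have hlabelled : Fintype.card (Σ G : S, ∀ v, Fin (d v) ≃ G.1.neighborSet v) =
      S.ncard * ∏ v, (d v)! := by
    have hcount (G : S) : Fintype.card (∀ v, Fin (d v) ≃ G.1.neighborSet v) = ∏ v, (d v)! := by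
      rw [Fintype.card_pi]
      refine prod_congr rfl fun v _ => ?_
      rw [Fintype.card_equiv (Fintype.equivOfCardEq ?_), Fintype.card_fin]
      rw [Fintype.card_fin, card_neighborSet_eq_degree, G.2 v]
    rw [Fintype.card_sigma, sum_congr rfl fun G _ => hcount G, sum_const, Finset.card_univ,
      smul_eq_mul, ← Nat.card_coe_set_eq, Nat.card_eq_fintype_card]
  have hinj : Function.Injective fun p : Σ G : S, ∀ v, Fin (d v) ≃ G.1.neighborSet v =>
      configuration p.2 := by
    rintro ⟨⟨G₁, _⟩, ℓ₁⟩ ⟨⟨G₂, _⟩, ℓ₂⟩ h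
    cases configuration_injective (V := V) (d := d) (a₁ := ⟨G₁, ℓ₁⟩) (a₂ := ⟨G₂, ℓ₂⟩) h
    rfl
  calc S.ncard * (∏ v, (d v)!) * (2 ^ k * k !)
      = Fintype.card (Σ G : S, ∀ v, Fin (d v) ≃ G.1.neighborSet v) * (2 ^ k * k !) := by
        rw [hlabelled]
    _ ≤ #{g : Equiv.Perm (Σ v, Fin (d v)) | g.cycleType = Multiset.replicate k 2} *
          (2 ^ k * k !) :=
        Nat.mul_le_mul_right _ <| card_le_card_of_injOn _
          (fun p _ => by simpa using cycleType_configuration p.2 hk) hinj.injOn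
    _ = (2 * k)! := Equiv.Perm.card_cycleType_eq_replicate_two_mul (by simp [hk])

end SimpleGraph

open scoped Classical in
/-- Configuration model bound: the number of simple graphs on `{1,…,n}` with
degree sequence `d` is at most `M! / (2^{M/2} (M/2)! ∏ dⱼ!)`. -/
theorem stmt_7 (n : ℕ) (d : Fin n → ℕ) (M : ℕ) (hM : M = ∑ j, d j)
    (hEven : Even M) :
    (Set.ncard {G : SimpleGraph (Fin n) | ∀ v, G.degree v = d v} : ℝ) ≤
      (Nat.factorial M : ℝ) /
        (2 ^ (M / 2) * Nat.factorial (M / 2) * ∏ j, Nat.factorial (d j)) := by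
  have hM2 : M = 2 * (M / 2) := (Nat.two_mul_div_two_of_even hEven).symm
  have hbound := SimpleGraph.ncard_setOf_degree_eq_mul_le d (k := M / 2) (by omega)
  rw [← hM2] at hbound
  rw [le_div_iff₀ (by positivity)]
  calc _ = ((_ * (∏ j, (d j)!) * (2 ^ (M / 2) * (M / 2)!) : ℕ) : ℝ) := by push_cast; ring
    _ ≤ _ := by exact_mod_cast hbound
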